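/- The cardinality of the closure cl(φ) is at most |φ|, and every formula in cl(φ) has size at most |φ|². -/

import Mathlib

mutual
inductive Fml : Type where
  | var : ℕ → Fml
  | neg : Fml → Fml
  | and : Fml → Fml → Fml
  | or : Fml → Fml → Fml
  | dia : Prog → Fml → Fml
  | box : Prog → Fml → Fml
  deriving DecidableEq
inductive Prog : Type where
  | atom : ℕ → Prog
  | conv : ℕ → Prog
  | seq : Prog → Prog → Prog
  | choice : Prog → Prog → Prog
  | star : Prog → Prog
  | test : Fml → Prog
  deriving DecidableEq
end

structure Model (W : Type) where
  R : ℕ → W → W → Prop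
  V : ℕ → W → Prop

mutual
def Sat {W : Type} (M : Model W) : W → Fml → Prop
  | w, .var p => M.V p w
  | w, .neg φ => ¬ Sat M w φ
  | w, .and φ ψ => Sat M w φ ∧ Sat M w ψ
  | w, .or φ ψ => Sat M w φ ∨ Sat M w ψ
  | w, .dia γ φ => ∃ v, PRel M γ w v ∧ Sat M v φ
  | w, .box γ φ => ∀ v, PRel M γ w v → Sat M v φ
def PRel {W : Type} (M : Model W) : Prog → W → W → Prop
  | .atom a, w, v => M.R a w v
  | .conv a, w, v => M.R a v w
  | .seq γ δ, w, v => ∃ u, PRel M γ w u ∧ PRel M δ u v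
  | .choice γ δ, w, v => PRel M γ w v ∨ PRel M δ w v
  | .star γ, w, v => Relation.ReflTransGen (fun a b => PRel M γ a b) w v
  | .test φ, w, v => w = v ∧ Sat M w φ
end
mutual
def IsNNF : Fml → Prop
  | .var _ => True
  | .neg (.var _) => True
  | .neg _ => False
  | .and φ ψ => IsNNF φ ∧ IsNNF ψ
  | .or φ ψ => IsNNF φ ∧ IsNNF ψ
  | .dia γ φ => IsNNFP γ ∧ IsNNF φ
  | .box γ φ => IsNNFP γ ∧ IsNNF φ
def IsNNFP : Prog → Prop
  | .atom _ => True
  | .conv _ => True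
  | .seq γ δ => IsNNFP γ ∧ IsNNFP δ
  | .choice γ δ => IsNNFP γ ∧ IsNNFP δ
  | .star γ => IsNNFP γ
  | .test φ => IsNNF φ
end

mutual
/-- `nnf φ` is the negation normal form of `φ`. -/
def nnf : Fml → Fml
  | .var p => .var p
  | .neg φ => nnfNeg φ
  | .and φ ψ => .and (nnf φ) (nnf ψ)
  | .or φ ψ => .or (nnf φ) (nnf ψ)
  | .dia γ φ => .dia γ (nnf φ)
  | .box γ φ => .box γ (nnf φ)
/-- `nnfNeg φ = nnf (¬ φ)`, written `∼φ`. -/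
def nnfNeg : Fml → Fml
  | .var p => .neg (.var p)
  | .neg φ => nnf φ
  | .and φ ψ => .or (nnfNeg φ) (nnfNeg ψ)
  | .or φ ψ => .and (nnfNeg φ) (nnfNeg ψ)
  | .dia γ φ => .box γ (nnfNeg φ)
  | .box γ φ => .dia γ (nnfNeg φ)
end

/-- Literal programs: atomic programs or converses of atomic programs. -/
inductive Lit : Type where
  | atom : ℕ → Lit
  | conv : ℕ → Lit
  deriving DecidableEq

def Lit.toProg : Lit → Prog
  | .atom a => .atom a
  | .conv a => .conv a

/-- The converse `l⁻` of a literal program. -/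
def Lit.inv : Lit → Lit
  | .atom a => .conv a
  | .conv a => .atom a

/-- The reduction relation `⤳` on ⟨·⟩-formulae. -/
inductive Red : Fml → Fml → Prop where
  | seq (γ δ χ) : Red (.dia (.seq γ δ) χ) (.dia γ (.dia δ χ))
  | choiceL (γ δ χ) : Red (.dia (.choice γ δ) χ) (.dia γ χ)
  | choiceR (γ δ χ) : Red (.dia (.choice γ δ) χ) (.dia δ χ)
  | star1 (γ χ) : Red (.dia (.star γ) χ) χ
  | star2 (γ χ) : Red (.dia (.star γ) χ) (.dia γ (.dia (.star γ) χ))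
  | test (ϕ χ) : Red (.dia (.test ϕ) χ) χ

/-- `InPre ψ φ` means `φ ∈ pre(ψ)`, i.e. `φ = ⟨γ₁⟩…⟨γ_k⟩ψ`. -/
inductive InPre (ψ : Fml) : Fml → Prop where
  | base : InPre ψ ψ
  | step (γ φ) : InPre ψ φ → InPre ψ (.dia γ φ)

/-- `φ` is an eventuality: `φ = ⟨γ₁⟩…⟨γ_k⟩⟨γ*⟩ψ`. -/
def IsEv (φ : Fml) : Prop := ∃ γ ψ, InPre (.dia (.star γ) ψ) φ

mutual
/-- Size of formulas. -/
def fsize : Fml → ℕ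
  | .var _ => 1
  | .neg (.var _) => 1
  | .neg φ => 1 + fsize φ
  | .and φ ψ => 1 + fsize φ + fsize ψ
  | .or φ ψ => 1 + fsize φ + fsize ψ
  | .dia γ φ => psize γ + fsize φ
  | .box γ φ => psize γ + fsize φ
/-- Size of programs. -/
def psize : Prog → ℕ
  | .atom _ => 1
  | .conv _ => 1
  | .seq γ δ => 1 + psize γ + psize δ
  | .choice γ δ => 1 + psize γ + psize δ
  | .star γ => 1 + psize γ
  | .test φ => 1 + fsize φ
end
/-- One decomposition step generating the closure `cl(φ)`. -/
inductive ClStep : Fml → Fml → Prop where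
  | diaLit (l : Lit) (ψ) : ClStep (.dia l.toProg ψ) ψ
  | boxLit (l : Lit) (ψ) : ClStep (.box l.toProg ψ) ψ
  | andL (φ ψ) : ClStep (.and φ ψ) φ
  | andR (φ ψ) : ClStep (.and φ ψ) ψ
  | orL (φ ψ) : ClStep (.or φ ψ) φ
  | orR (φ ψ) : ClStep (.or φ ψ) ψ
  | boxChoiceL (γ δ φ) : ClStep (.box (.choice γ δ) φ) (.box γ φ)
  | boxChoiceR (γ δ φ) : ClStep (.box (.choice γ δ) φ) (.box δ φ)
  | boxStar1 (γ φ) : ClStep (.box (.star γ) φ) φ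
  | boxStar2 (γ φ) : ClStep (.box (.star γ) φ) (.box γ (.box (.star γ) φ))
  | diaTest1 (ψ φ) : ClStep (.dia (.test ψ) φ) φ
  | diaTest2 (ψ φ) : ClStep (.dia (.test ψ) φ) ψ
  | diaSeq (γ δ φ) : ClStep (.dia (.seq γ δ) φ) (.dia γ (.dia δ φ))
  | boxSeq (γ δ φ) : ClStep (.box (.seq γ δ) φ) (.box γ (.box δ φ))
  | diaChoiceL (γ δ φ) : ClStep (.dia (.choice γ δ) φ) (.dia γ φ)
  | diaChoiceR (γ δ φ) : ClStep (.dia (.choice γ δ) φ) (.dia δ φ)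
  | diaStar1 (γ φ) : ClStep (.dia (.star γ) φ) φ
  | diaStar2 (γ φ) : ClStep (.dia (.star γ) φ) (.dia γ (.dia (.star γ) φ))
  | boxTest1 (ψ φ) : ClStep (.box (.test ψ) φ) φ
  | boxTest2 (ψ φ) : ClStep (.box (.test ψ) φ) (nnfNeg ψ)

/-- The closure `cl(φ)`: the least set containing `φ` and closed under `ClStep`. -/
def Cl (φ : Fml) : Set Fml := {ψ | Relation.ReflTransGen ClStep φ ψ}

/-- A single step of a (model) chain: a literal-program diamond is instantiated,
otherwise a `⤳`-reduction happens at the same world. -/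
def ChainStep {W : Type} (M : Model W) : (W × Fml) → (W × Fml) → Prop
  | (w, .dia (.atom a) χ), (w', χ') => χ' = χ ∧ M.R a w w'
  | (w, .dia (.conv a) χ), (w', χ') => χ' = χ ∧ M.R a w' w
  | (w, χ), (w', χ') => Red χ χ' ∧ w' = w

/-- `σ` is a model chain for `(M, w, φ, ψ)`. -/
def ModelChain {W : Type} (M : Model W) (w : W) (φ ψ : Fml) (σ : List (W × Fml)) : Prop :=
  ∃ h : σ ≠ [], σ.head h = (w, φ) ∧ (σ.getLast h).2 = ψ ∧
    (∀ p ∈ σ, Sat M p.1 p.2) ∧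
    ∀ i, (h1 : i + 1 < σ.length) →
      ChainStep M (σ.get ⟨i, by omega⟩) (σ.get ⟨i + 1, h1⟩)

open Classical in
/-- `ex φ`: the largest non-eventuality `ψ` with `φ ∈ pre(ψ)`. -/
noncomputable def ex : Fml → Fml
  | .dia γ ψ => if IsEv (.dia γ ψ) then ex ψ else .dia γ ψ
  | φ => φ

mutual
/-- `SubF χ φ`: `χ` is a subformula of the formula `φ`. -/
inductive SubF : Fml → Fml → Prop where
  | refl (φ) : SubF φ φ
  | neg {χ φ} : SubF χ φ → SubF χ (.neg φ)
  | andL {χ φ ψ} : SubF χ φ → SubF χ (.and φ ψ)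
  | andR {χ φ ψ} : SubF χ ψ → SubF χ (.and φ ψ)
  | orL {χ φ ψ} : SubF χ φ → SubF χ (.or φ ψ)
  | orR {χ φ ψ} : SubF χ ψ → SubF χ (.or φ ψ)
  | diaF {χ γ φ} : SubF χ φ → SubF χ (.dia γ φ)
  | diaP {χ γ φ} : SubP χ γ → SubF χ (.dia γ φ)
  | boxF {χ γ φ} : SubF χ φ → SubF χ (.box γ φ)
  | boxP {χ γ φ} : SubP χ γ → SubF χ (.box γ φ)
/-- `SubP χ γ`: `χ` is a subformula of the program `γ`. -/
inductive SubP : Fml → Prog → Prop where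
  | seqL {χ γ δ} : SubP χ γ → SubP χ (.seq γ δ)
  | seqR {χ γ δ} : SubP χ δ → SubP χ (.seq γ δ)
  | choiceL {χ γ δ} : SubP χ γ → SubP χ (.choice γ δ)
  | choiceR {χ γ δ} : SubP χ δ → SubP χ (.choice γ δ)
  | star {χ γ} : SubP χ γ → SubP χ (.star γ)
  | test {χ φ} : SubF χ φ → SubP χ (.test φ)
end
/-- `ann` is an annotation for `Γ`: it maps some eventualities `φ ∈ Γ`
to a formula `ann φ ∈ Γ` with `φ ⤳ ann φ`. -/
def IsAnnotation (Γ : Set Fml) (ann : Fml → Option Fml) : Prop :=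
  ∀ φ φ', ann φ = some φ' → φ ∈ Γ ∧ IsEv φ ∧ φ' ∈ Γ ∧ Red φ φ'

/-- `ann` is full on `Γ`: it is defined on all eventualities of `Γ`. -/
def FullAnn (Γ : Set Fml) (ann : Fml → Option Fml) : Prop :=
  ∀ φ ∈ Γ, IsEv φ → (ann φ).isSome

/-- `ann` is non-cyclic: there is no cycle `φ₀, …, φ_n` with `ann φ_i = φ_{i+1 mod n+1}`. -/
def NonCyclic (ann : Fml → Option Fml) : Prop :=
  ¬ ∃ (n : ℕ) (f : ℕ → Fml), (∀ i < n, ann (f i) = some (f (i + 1))) ∧ ann (f n) = some (f 0)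

/-- One step of iterating an annotation (identity where undefined). -/
def annStep (ann : Fml → Option Fml) (φ : Fml) : Fml := (ann φ).getD φ

/-- The pure-formula version of a chain step:
if `χ = ⟨l⟩χ₀` for a literal program `l` then `χ' = χ₀`, else `χ ⤳ χ'`. -/
def FStep : Fml → Fml → Prop
  | .dia (.atom _) χ, χ' => χ' = χ
  | .dia (.conv _) χ, χ' => χ' = χ
  | χ, χ' => Red χ χ'

mutual
/-- The atomic program `d` occurs in a formula. -/
def OccursF (d : ℕ) : Fml → Prop
  | .var _ => False
  | .neg φ => OccursF d φ
  | .and φ ψ => OccursF d φ ∨ OccursF d ψ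
  | .or φ ψ => OccursF d φ ∨ OccursF d ψ
  | .dia γ φ => OccursP d γ ∨ OccursF d φ
  | .box γ φ => OccursP d γ ∨ OccursF d φ
/-- The atomic program `d` occurs in a program (as `d` or `d⁻`). -/
def OccursP (d : ℕ) : Prog → Prop
  | .atom a => a = d
  | .conv a => a = d
  | .seq γ δ => OccursP d γ ∨ OccursP d δ
  | .choice γ δ => OccursP d γ ∨ OccursP d δ
  | .star γ => OccursP d γ
  | .test φ => OccursF d φ
end

/-- `(M, w, chn)` annotated-satisfies `(Γ, ann)`. -/
def AnnSat {W : Type} (M : Model W) (w : W)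
    (chn : Fml → Option (List (W × Fml))) (Γ : Set Fml) (ann : Fml → Option Fml) : Prop :=
  (∀ ψ ∈ Γ, Sat M w ψ) ∧
  (∀ ψ ∈ Γ, IsEv ψ → (chn ψ).isSome) ∧
  (∀ ψ σ, IsEv ψ → chn ψ = some σ →
    ModelChain M w ψ (ex ψ) σ ∧
    (∀ i, (h : i < σ.length) → ∀ χ, σ.get ⟨i, h⟩ = (w, χ) → IsEv χ → chn χ = some (σ.drop i)) ∧
    (∀ ψ', ann ψ = some ψ' → ∃ h : 1 < σ.length, σ.get ⟨1, h⟩ = (w, ψ')))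

/-! The closure is contained in a finset `clFinset φ` defined by recursion on `φ`: a modal formula
`⟨γ⟩χ` or `[γ]χ` contributes the formulas met while decomposing `γ` with the continuation `χ` kept
opaque (decomposing `⟨γ*⟩χ` as a whole would not terminate), plus the closure of `χ`. Every
constructor of `φ` adds at most one formula, which bounds the cardinality by `|φ|`, and the
formulas contributed by `γ` have size at most `|γ|² + |χ|`. Since `clFinset ψ` contains the
one-step successors of `ψ`, and `ψ ∈ clFinset φ` implies `clFinset ψ ⊆ clFinset φ`, it contains
`cl(φ)`. -/

inductive Modality : Type where
  | dia
  | box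

namespace Modality

def app : Modality → Prog → Fml → Fml
  | dia => .dia
  | box => .box

def testArm : Modality → Fml → Fml
  | dia, ψ => ψ
  | box, ψ => nnfNeg ψ

end Modality

theorem psize_pos (γ : Prog) : 0 < psize γ := by
  cases γ <;> simp only [psize] <;> omega

theorem fsize_pos (φ : Fml) : 0 < fsize φ := by
  cases φ with
  | neg ψ => cases ψ <;> simp only [fsize] <;> omega
  | dia γ ψ | box γ ψ => have := psize_pos γ; simp only [fsize]; omega
  | _ => simp only [fsize]; omega

mutual
theorem fsize_nnf_le : ∀ φ : Fml, fsize (nnf φ) ≤ fsize φ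
  | .var _ => le_rfl
  | .neg φ => by
      have := fsize_nnfNeg_le φ
      cases φ <;> simp only [nnf, fsize] at * <;> omega
  | .and φ ψ | .or φ ψ => by
      have := fsize_nnf_le φ; have := fsize_nnf_le ψ
      simp only [nnf, fsize]; omega
  | .dia γ φ | .box γ φ => by
      have := fsize_nnf_le φ; simp only [nnf, fsize]; omega
theorem fsize_nnfNeg_le : ∀ φ : Fml, fsize (nnfNeg φ) ≤ fsize φ
  | .var _ => le_rfl
  | .neg φ => by
      have := fsize_nnf_le φ
      cases φ <;> simp only [nnfNeg, fsize] at * <;> omega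
  | .and φ ψ | .or φ ψ => by
      have := fsize_nnfNeg_le φ; have := fsize_nnfNeg_le ψ
      simp only [nnfNeg, fsize]; omega
  | .dia γ φ | .box γ φ => by
      have := fsize_nnfNeg_le φ; simp only [nnfNeg, fsize]; omega
end

theorem fsize_testArm_le (m : Modality) (ψ : Fml) : fsize (m.testArm ψ) ≤ fsize ψ := by
  cases m
  · exact le_rfl
  · exact fsize_nnfNeg_le ψ

mutual
def clFinset : Fml → Finset Fml
  | .var p => {.var p}
  | .neg φ => {.neg φ}
  | .and φ ψ => insert (.and φ ψ) (clFinset φ ∪ clFinset ψ)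
  | .or φ ψ => insert (.or φ ψ) (clFinset φ ∪ clFinset ψ)
  | .dia γ φ => progClFinset .dia γ φ ∪ clFinset φ
  | .box γ φ => progClFinset .box γ φ ∪ clFinset φ
  termination_by φ => fsize φ
  decreasing_by
    all_goals simp only [fsize]
    all_goals first | omega | (have := fsize_pos φ; have := psize_pos γ; omega)
def progClFinset (m : Modality) : Prog → Fml → Finset Fml
  | .atom a, χ => {m.app (.atom a) χ}
  | .conv a, χ => {m.app (.conv a) χ}
  | .seq γ δ, χ =>
      insert (m.app (.seq γ δ) χ) (progClFinset m γ (m.app δ χ) ∪ progClFinset m δ χ)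
  | .choice γ δ, χ => insert (m.app (.choice γ δ) χ) (progClFinset m γ χ ∪ progClFinset m δ χ)
  | .star γ, χ => insert (m.app (.star γ) χ) (progClFinset m γ (m.app (.star γ) χ))
  | .test ψ, χ => insert (m.app (.test ψ) χ) (clFinset (m.testArm ψ))
  termination_by γ => psize γ
  decreasing_by
    all_goals simp only [psize]
    all_goals first | omega | (have := fsize_testArm_le m ψ; omega)
end

theorem clFinset_app (m : Modality) (γ : Prog) (χ : Fml) :
    clFinset (m.app γ χ) = progClFinset m γ χ ∪ clFinset χ := by
  cases m <;> rw [Modality.app, clFinset]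

theorem fsize_app (m : Modality) (γ : Prog) (χ : Fml) :
    fsize (m.app γ χ) = psize γ + fsize χ := by
  cases m <;> rfl

theorem Finset.card_insert_union_le {α : Type*} [DecidableEq α] (a : α) (s t : Finset α) :
    (insert a (s ∪ t)).card ≤ s.card + t.card + 1 :=
  (card_insert_le a _).trans (Nat.add_le_add_right (card_union_le s t) 1)

mutual
theorem card_clFinset_le : ∀ φ : Fml, (clFinset φ).card ≤ fsize φ
  | .var _ | .neg _ => by rw [clFinset, Finset.card_singleton]; exact fsize_pos _
  | .and φ ψ | .or φ ψ => by
      have := card_clFinset_le φ; have := card_clFinset_le ψ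
      rw [clFinset, fsize]
      refine (Finset.card_insert_union_le _ _ _).trans ?_; omega
  | .dia γ φ | .box γ φ => by
      rw [clFinset, fsize]
      exact (Finset.card_union_le _ _).trans
        (Nat.add_le_add (card_progClFinset_le _ γ φ) (card_clFinset_le φ))
  termination_by φ => fsize φ
  decreasing_by
    all_goals simp only [fsize]
    all_goals first | omega | (have := fsize_pos φ; have := psize_pos γ; omega)
theorem card_progClFinset_le (m : Modality) :
    ∀ (γ : Prog) (χ : Fml), (progClFinset m γ χ).card ≤ psize γ
  | .atom _, _ | .conv _, _ => by rw [progClFinset, Finset.card_singleton, psize]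
  | .seq γ δ, χ => by
      have := card_progClFinset_le m γ (m.app δ χ); have := card_progClFinset_le m δ χ
      rw [progClFinset, psize]
      refine (Finset.card_insert_union_le _ _ _).trans ?_; omega
  | .choice γ δ, χ => by
      have := card_progClFinset_le m γ χ; have := card_progClFinset_le m δ χ
      rw [progClFinset, psize]
      refine (Finset.card_insert_union_le _ _ _).trans ?_; omega
  | .star γ, χ => by
      have := card_progClFinset_le m γ (m.app (.star γ) χ)
      rw [progClFinset, psize]
      refine (Finset.card_insert_le _ _).trans ?_; omega
  | .test ψ, χ => by
      have := card_clFinset_le (m.testArm ψ)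
      have := fsize_testArm_le m ψ
      rw [progClFinset, psize]
      refine (Finset.card_insert_le _ _).trans ?_; omega
  termination_by γ => psize γ
  decreasing_by
    all_goals simp only [psize]
    all_goals first | omega | (have := fsize_testArm_le m ψ; omega)
end

mutual
theorem fsize_le_of_mem_clFinset : ∀ (φ ψ : Fml), ψ ∈ clFinset φ → fsize ψ ≤ fsize φ ^ 2
  | .var _, ψ, h | .neg _, ψ, h => by
      rw [clFinset, Finset.mem_singleton] at h
      subst h; exact Nat.le_self_pow two_ne_zero _
  | .and φ₁ φ₂, ψ, h | .or φ₁ φ₂, ψ, h => by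
      rw [clFinset, Finset.mem_insert, Finset.mem_union] at h
      rcases h with rfl | h | h
      · exact Nat.le_self_pow two_ne_zero _
      all_goals rw [fsize]
      · exact (fsize_le_of_mem_clFinset φ₁ ψ h).trans (Nat.pow_le_pow_left (by omega) 2)
      · exact (fsize_le_of_mem_clFinset φ₂ ψ h).trans (Nat.pow_le_pow_left (by omega) 2)
  | .dia γ φ, ψ, h | .box γ φ, ψ, h => by
      rw [clFinset, Finset.mem_union] at h
      rw [fsize]
      rcases h with h | h
      · refine (fsize_le_of_mem_progClFinset _ γ φ ψ h).trans ?_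
        have := Nat.le_self_pow two_ne_zero (fsize φ)
        ring_nf; omega
      · exact (fsize_le_of_mem_clFinset φ ψ h).trans (Nat.pow_le_pow_left (by omega) 2)
  termination_by φ => fsize φ
  decreasing_by
    all_goals simp only [fsize]
    all_goals first | omega | (have := fsize_pos φ; have := psize_pos γ; omega)
theorem fsize_le_of_mem_progClFinset (m : Modality) :
    ∀ (γ : Prog) (χ ψ : Fml), ψ ∈ progClFinset m γ χ → fsize ψ ≤ psize γ ^ 2 + fsize χ
  | .atom _, χ, ψ, h | .conv _, χ, ψ, h => by
      rw [progClFinset, Finset.mem_singleton] at h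
      subst h; rw [fsize_app, psize]; omega
  | .seq γ δ, χ, ψ, h => by
      rw [progClFinset, Finset.mem_insert, Finset.mem_union] at h
      rw [psize]
      rcases h with rfl | h | h
      · rw [fsize_app, psize]; ring_nf; omega
      · refine (fsize_le_of_mem_progClFinset m γ _ ψ h).trans ?_
        rw [fsize_app]; ring_nf; omega
      · refine (fsize_le_of_mem_progClFinset m δ χ ψ h).trans ?_
        ring_nf; omega
  | .choice γ δ, χ, ψ, h => by
      rw [progClFinset, Finset.mem_insert, Finset.mem_union] at h
      rw [psize]
      rcases h with rfl | h | h
      · rw [fsize_app, psize]; ring_nf; omega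
      · refine (fsize_le_of_mem_progClFinset m γ χ ψ h).trans ?_
        ring_nf; omega
      · refine (fsize_le_of_mem_progClFinset m δ χ ψ h).trans ?_
        ring_nf; omega
  | .star γ, χ, ψ, h => by
      rw [progClFinset, Finset.mem_insert] at h
      rw [psize]
      rcases h with rfl | h
      · rw [fsize_app, psize]; ring_nf; omega
      · refine (fsize_le_of_mem_progClFinset m γ _ ψ h).trans ?_
        rw [fsize_app, psize]; ring_nf; omega
  | .test φ, χ, ψ, h => by
      rw [progClFinset, Finset.mem_insert] at h
      rw [psize]
      rcases h with rfl | h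
      · rw [fsize_app, psize]; ring_nf; omega
      · refine (fsize_le_of_mem_clFinset _ ψ h).trans ?_
        have := Nat.pow_le_pow_left (fsize_testArm_le m φ) 2
        ring_nf at this ⊢; omega
  termination_by γ => psize γ
  decreasing_by
    all_goals simp only [psize]
    all_goals first | omega | (have := fsize_testArm_le m φ; omega)
end

theorem dia_mem_progClFinset (γ : Prog) (χ : Fml) : Fml.dia γ χ ∈ progClFinset .dia γ χ := by
  cases γ <;> simp [progClFinset, Modality.app]

theorem box_mem_progClFinset (γ : Prog) (χ : Fml) : Fml.box γ χ ∈ progClFinset .box γ χ := by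
  cases γ <;> simp [progClFinset, Modality.app]

theorem mem_clFinset_self (φ : Fml) : φ ∈ clFinset φ := by
  cases φ <;> simp [clFinset, dia_mem_progClFinset, box_mem_progClFinset]

mutual
theorem clFinset_subset_of_mem : ∀ (φ ψ : Fml), ψ ∈ clFinset φ → clFinset ψ ⊆ clFinset φ
  | .var _, ψ, h | .neg _, ψ, h => by
      rw [clFinset, Finset.mem_singleton] at h
      rw [h]
  | .and φ₁ φ₂, ψ, h | .or φ₁ φ₂, ψ, h => by
      rw [clFinset, Finset.mem_insert, Finset.mem_union] at h
      rcases h with rfl | h | h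
      · exact subset_rfl
      · have := clFinset_subset_of_mem φ₁ ψ h
        rw [clFinset]; grind
      · have := clFinset_subset_of_mem φ₂ ψ h
        rw [clFinset]; grind
  | .dia γ φ, ψ, h | .box γ φ, ψ, h => by
      rw [clFinset, Finset.mem_union] at h
      rw [clFinset]
      rcases h with h | h
      · exact clFinset_subset_of_mem_progClFinset _ γ φ ψ h
      · exact (clFinset_subset_of_mem φ ψ h).trans Finset.subset_union_right
  termination_by φ => fsize φ
  decreasing_by
    all_goals simp only [fsize]
    all_goals first | omega | (have := fsize_pos φ; have := psize_pos γ; omega)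
theorem clFinset_subset_of_mem_progClFinset (m : Modality) :
    ∀ (γ : Prog) (χ ψ : Fml), ψ ∈ progClFinset m γ χ →
      clFinset ψ ⊆ progClFinset m γ χ ∪ clFinset χ
  | .atom _, χ, ψ, h | .conv _, χ, ψ, h => by
      rw [progClFinset, Finset.mem_singleton] at h
      rw [h, clFinset_app, progClFinset]
  | .seq γ δ, χ, ψ, h => by
      rw [progClFinset, Finset.mem_insert, Finset.mem_union] at h
      rcases h with rfl | h | h
      · rw [clFinset_app]
      · have := clFinset_subset_of_mem_progClFinset m γ _ ψ h
        rw [clFinset_app] at this; rw [progClFinset]; grind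
      · have := clFinset_subset_of_mem_progClFinset m δ χ ψ h
        rw [progClFinset]; grind
  | .choice γ δ, χ, ψ, h => by
      rw [progClFinset, Finset.mem_insert, Finset.mem_union] at h
      rcases h with rfl | h | h
      · rw [clFinset_app]
      · have := clFinset_subset_of_mem_progClFinset m γ χ ψ h
        rw [progClFinset]; grind
      · have := clFinset_subset_of_mem_progClFinset m δ χ ψ h
        rw [progClFinset]; grind
  | .star γ, χ, ψ, h => by
      rw [progClFinset, Finset.mem_insert] at h
      rcases h with rfl | h
      · rw [clFinset_app]
      · have := clFinset_subset_of_mem_progClFinset m γ _ ψ h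
        rw [clFinset_app, progClFinset] at this; rw [progClFinset]; grind
  | .test φ, χ, ψ, h => by
      rw [progClFinset, Finset.mem_insert] at h
      rcases h with rfl | h
      · rw [clFinset_app]
      · have := clFinset_subset_of_mem _ ψ h
        rw [progClFinset]; grind
  termination_by γ => psize γ
  decreasing_by
    all_goals simp only [psize]
    all_goals first | omega | (have := fsize_testArm_le m φ; omega)
end

theorem mem_clFinset_of_clStep {ψ χ : Fml} (h : ClStep ψ χ) : χ ∈ clFinset ψ := by
  cases h with
  | diaLit l _ | boxLit l _ => cases l <;> simp [Lit.toProg, clFinset, mem_clFinset_self]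
  | _ => simp [clFinset, progClFinset, Modality.app, Modality.testArm, mem_clFinset_self,
      dia_mem_progClFinset, box_mem_progClFinset]

theorem cl_subset_clFinset (φ : Fml) : Cl φ ⊆ clFinset φ := by
  intro ψ h
  induction h with
  | refl => exact mem_clFinset_self φ
  | tail _ hstep ih => exact clFinset_subset_of_mem φ _ ih (mem_clFinset_of_clStep hstep)

/-- `|cl(φ)| ≤ |φ|`, and every formula in `cl(φ)` has size at most `|φ|²`. -/
theorem closure_card_and_size (φ : Fml) (hφ : IsNNF φ) :
    (Cl φ).Finite ∧ (Cl φ).ncard ≤ fsize φ ∧ ∀ ψ ∈ Cl φ, fsize ψ ≤ (fsize φ) ^ 2 := by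
  have hsub := cl_subset_clFinset φ
  refine ⟨(clFinset φ).finite_toSet.subset hsub, ?_,
    fun ψ hψ => fsize_le_of_mem_clFinset φ ψ (hsub hψ)⟩
  calc (Cl φ).ncard ≤ (clFinset φ : Set Fml).ncard := Set.ncard_le_ncard hsub
    _ = (clFinset φ).card := Set.ncard_coe_finset _
    _ ≤ fsize φ := card_clFinset_le φ
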